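/- arXiv:1211.3552 — 4 statements merged into one kernel-verified Lean document; each statement's English description precedes it below -/
import Mathlib

section
/- In Cl(g) with γ = -(1/6) Σ_{a,b,c} f_{abc} x_a x_b x_c, the commutator [x_a, γ] equals g_a = -(1/2) Σ_{r,s} f_{ars} x_r x_s. -/
/-!
The anticommutator with `x_a` is a graded derivation, so
`{x_a, x_p x_q x_r} = δ_{ap} x_q x_r - δ_{aq} x_p x_r + δ_{ar} x_p x_q`.
Summing against `f_{pqr}`, total antisymmetry makes the three resulting sums equal, so
`{x_a, γ} = -(1/6) · 3 · ∑ f_{ars} x_r x_s = g_a`.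
-/

open Finset

theorem mul_mul_mul_add_mul_mul_mul {A : Type*} [Ring A] (y u v w : A) :
    y * (u * v * w) + u * v * w * y
      = (y * u + u * y) * v * w - u * (y * v + v * y) * w + u * v * (y * w + w * y) := by
  noncomm_ring

theorem sum_cyclic_eq_three_smul {K M ι : Type*} [CommRing K] [AddCommGroup M] [Module K M]
    [Fintype ι] {f : ι → ι → ι → K} (hf1 : ∀ a b c, f a b c = - f b a c)
    (hf2 : ∀ a b c, f a b c = - f a c b) (v : ι → ι → M) (a : ι) :
    ∑ q, ∑ r, f a q r • v q r - ∑ p, ∑ r, f p a r • v p r + ∑ p, ∑ q, f p q a • v p q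
      = (3 : K) • ∑ r, ∑ s, f a r s • v r s := by
  have h_mid : ∀ p r, f p a r = - f a p r := fun p r => hf1 p a r
  have h_last : ∀ p q, f p q a = f a p q := fun p q => by rw [hf2, hf1, neg_neg]
  simp only [h_mid, h_last, neg_smul, sum_neg_distrib, sub_neg_eq_add]
  rw [show (3 : K) = 1 + 1 + 1 by norm_num, add_smul, add_smul, one_smul]

theorem anticomm_sum_cubic {K A ι : Type*} [CommRing K] [Ring A] [Algebra K A] [Fintype ι]
    [DecidableEq ι] {x : ι → A} (hx : ∀ a b, x a * x b + x b * x a = if a = b then 1 else 0)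
    (f : ι → ι → ι → K) (a : ι) :
    x a * (∑ p, ∑ q, ∑ r, f p q r • (x p * x q * x r))
        + (∑ p, ∑ q, ∑ r, f p q r • (x p * x q * x r)) * x a
      = ∑ q, ∑ r, f a q r • (x q * x r) - ∑ p, ∑ r, f p a r • (x p * x r)
        + ∑ p, ∑ q, f p q a • (x p * x q) := by
  have term : ∀ p q r, f p q r • (x a * (x p * x q * x r) + x p * x q * x r * x a)
      = (if a = p then f p q r • (x q * x r) else 0)
        - (if a = q then f p q r • (x p * x r) else 0)
        + (if a = r then f p q r • (x p * x q) else 0) := by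
    intro p q r
    rw [mul_mul_mul_add_mul_mul_mul, hx, hx, hx]
    split_ifs <;> simp [smul_sub, smul_add]
  have expand : x a * (∑ p, ∑ q, ∑ r, f p q r • (x p * x q * x r))
        + (∑ p, ∑ q, ∑ r, f p q r • (x p * x q * x r)) * x a
      = ∑ p, ∑ q, ∑ r, f p q r • (x a * (x p * x q * x r) + x p * x q * x r * x a) := by
    simp only [mul_sum, sum_mul, mul_smul_comm, smul_mul_assoc, smul_add, sum_add_distrib]
  rw [expand]
  simp only [term, sum_add_distrib, sum_sub_distrib, sum_ite_irrel, sum_const_zero, sum_ite_eq,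
    mem_univ, if_true]

theorem stmt14_general {K : Type*} [Field K] [CharZero K]
    {A : Type*} [Ring A] [Algebra K A] {n : ℕ}
    (x : Fin n → A) (f : Fin n → Fin n → Fin n → K)
    (hx : ∀ a b, x a * x b + x b * x a = if a = b then 1 else 0)
    (hf1 : ∀ a b c, f a b c = - f b a c)
    (hf2 : ∀ a b c, f a b c = - f a c b)
    (γ : A)
    (hγ : γ = (-(1/6 : K)) • ∑ a, ∑ b, ∑ c, f a b c • (x a * x b * x c))
    (g : Fin n → A)
    (hg : ∀ a, g a = (-(1/2 : K)) • ∑ r, ∑ s, f a r s • (x r * x s)) :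
    ∀ a, x a * γ + γ * x a = g a := by
  intro a
  rw [hγ, hg a, mul_smul_comm, smul_mul_assoc, ← smul_add, anticomm_sum_cubic hx,
    sum_cyclic_eq_three_smul hf1 hf2, smul_smul]
  norm_num

/-- in the Clifford algebra (generators `x a` with
`x_a x_b + x_b x_a = δ_{ab}`), with totally antisymmetric structure constants
`f` satisfying the Jacobi identity and
`γ = -(1/6) ∑ f_{abc} x_a x_b x_c`, the super-commutator `[x_a, γ]`
(an anticommutator, both elements being odd) equals
`g_a = -(1/2) ∑ f_{ars} x_r x_s`. -/
theorem stmt14 {K : Type*} [Field K] [CharZero K]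
    {A : Type*} [Ring A] [Algebra K A] {n : ℕ}
    (x : Fin n → A) (f : Fin n → Fin n → Fin n → K)
    (hx : ∀ a b, x a * x b + x b * x a = if a = b then 1 else 0)
    (hf1 : ∀ a b c, f a b c = - f b a c)
    (hf2 : ∀ a b c, f a b c = - f a c b)
    (hjac : ∀ a b c d, ∑ e, (f a b e * f e c d + f c b e * f a e d
        + f d b e * f a c e) = 0)
    (γ : A)
    (hγ : γ = (-(1/6 : K)) • ∑ a, ∑ b, ∑ c, f a b c • (x a * x b * x c))
    (g : Fin n → A)
    (hg : ∀ a, g a = (-(1/2 : K)) • ∑ r, ∑ s, f a r s • (x r * x s)) :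
    ∀ a, x a * γ + γ * x a = g a :=
  stmt14_general x f hx hf1 hf2 γ hγ g hg
end

section
/- In Cl(g), the cubic element γ = -(1/6) Σ f_{abc} x_a x_b x_c squares to a scalar: γ² = -(1/48) Σ_{a,b,c} f_{abc} f_{abc}. -/
/-!
Put `S = ∑ f_abc x_a x_b x_c` and `B_d = ∑ f_dpq x_p x_q`, so that `S = ∑ x_d B_d`, and the Clifford
relations give `S x_d + x_d S = 3 B_d`. Commutation with `B_d` acts on the generators as `-2 ad(e_d)`,
so by the Jacobi identity (the invariance of `f`) it kills `S`. Hence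
`2 S² = ∑ ({S, x_d} B_d - x_d [S, B_d]) = 3 ∑ B_d²`. Expanding `0 = ∑ x_d [S, B_d]` with the
anticommutators instead yields `2 ∑ B_d² = -∑ f_abc²`, so `S² = -(3/4) ∑ f_abc²` and `γ² = S²/36`.
-/

namespace CliffordCubic

open Finset

section Reindex

variable {M ι : Type*} [AddCommMonoid M] [Fintype ι]

theorem sum_comm_reverse₃ (F : ι → ι → ι → M) :
    ∑ a, ∑ b, ∑ c, F a b c = ∑ c, ∑ b, ∑ a, F a b c := by
  rw [sum_comm_cycle]
  exact sum_congr rfl fun _ _ => sum_comm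

theorem sum_comm_swap_first_last₄ (F : ι → ι → ι → ι → M) :
    ∑ a, ∑ b, ∑ c, ∑ d, F a b c d = ∑ d, ∑ b, ∑ c, ∑ a, F a b c d :=
  calc ∑ a, ∑ b, ∑ c, ∑ d, F a b c d = ∑ a, ∑ d, ∑ b, ∑ c, F a b c d :=
        sum_congr rfl fun _ _ => sum_comm_cycle
    _ = ∑ d, ∑ a, ∑ b, ∑ c, F a b c d := sum_comm
    _ = ∑ d, ∑ b, ∑ c, ∑ a, F a b c d := sum_congr rfl fun _ _ => sum_comm_cycle.symm

end Reindex

variable {K A : Type*} [Field K] [Ring A] [Algebra K A] {n : ℕ}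

def cubic (x : Fin n → A) (h : Fin n → Fin n → Fin n → K) : A :=
  ∑ a, ∑ b, ∑ c, h a b c • (x a * x b * x c)

def bivector (x : Fin n → A) (f : Fin n → Fin n → Fin n → K) (d : Fin n) : A :=
  ∑ p, ∑ q, f d p q • (x p * x q)

variable {x : Fin n → A} {f : Fin n → Fin n → Fin n → K}

theorem cubic_eq_sum_mul_bivector : cubic x f = ∑ d, x d * bivector x f d := by
  simp only [cubic, bivector, mul_sum, mul_smul_comm, mul_assoc]

theorem mul_cubic_sub_cubic_mul (y : A) (g : Fin n → Fin n → K)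
    (hy : ∀ u, y * x u - x u * y = ∑ v, g u v • x v) (h : Fin n → Fin n → Fin n → K) :
    y * cubic x h - cubic x h * y =
      cubic x fun a b c => ∑ e, (g e a * h e b c + g e b * h a e c + g e c * h a b e) := by
  have leibniz (a b c : Fin n) : y * (x a * x b * x c) - x a * x b * x c * y
      = (y * x a - x a * y) * x b * x c + x a * (y * x b - x b * y) * x c
        + x a * x b * (y * x c - x c * y) := by noncomm_ring
  simp only [cubic, mul_sum, sum_mul, mul_smul_comm, smul_mul_assoc, ← sum_sub_distrib,
    ← smul_sub, leibniz, hy]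
  simp only [smul_add, smul_sum, smul_smul, sum_add_distrib, add_smul, sum_smul]
  refine congrArg₂ (· + ·) (congrArg₂ (· + ·) ?_ ?_) ?_
  · rw [sum_comm_swap_first_last₄]
    exact sum_congr rfl fun _ _ => sum_congr rfl fun _ _ => sum_congr rfl fun _ _ =>
      sum_congr rfl fun _ _ => by rw [mul_comm]
  · refine sum_congr rfl fun _ _ => ?_
    rw [sum_comm_reverse₃]
    exact sum_congr rfl fun _ _ => sum_congr rfl fun _ _ => sum_congr rfl fun _ _ => by
      rw [mul_comm]
  · exact sum_congr rfl fun _ _ => sum_congr rfl fun _ _ => sum_comm.trans <|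
      sum_congr rfl fun _ _ => sum_congr rfl fun _ _ => by rw [mul_comm]

section Clifford

variable (hx : ∀ a b, x a * x b + x b * x a = if a = b then 1 else 0)
include hx

theorem mul_mul_sub_mul_mul (a b c : Fin n) :
    x a * x b * x c - x c * (x a * x b) = (if b = c then x a else 0) - if a = c then x b else 0 := by
  have e : x a * x b * x c - x c * (x a * x b)
      = x a * (x b * x c + x c * x b) - (x a * x c + x c * x a) * x b := by noncomm_ring
  rw [e, hx, hx]
  split_ifs <;> simp

theorem two_smul_sum_smul_mul_of_symm (E : Fin n → Fin n → K) (hE : ∀ a b, E a b = E b a) :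
    (2 : K) • ∑ a, ∑ b, E a b • (x a * x b) = (∑ a, E a a) • (1 : A) := by
  have transpose : ∑ a, ∑ b, E a b • (x a * x b) = ∑ a, ∑ b, E a b • (x b * x a) := by
    rw [sum_comm]
    exact sum_congr rfl fun _ _ => sum_congr rfl fun _ _ => by rw [hE]
  calc (2 : K) • ∑ a, ∑ b, E a b • (x a * x b)
      = ∑ a, ∑ b, E a b • (x a * x b + x b * x a) := by
        rw [two_smul]
        nth_rewrite 2 [transpose]
        simp only [smul_add, sum_add_distrib]
    _ = (∑ a, E a a) • (1 : A) := by
        simp only [hx, smul_ite, smul_zero, sum_ite_eq, mem_univ, if_true, sum_smul]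

end Clifford

section Alternating

variable (hf1 : ∀ a b c, f a b c = -f b a c) (hf2 : ∀ a b c, f a b c = -f a c b)
include hf1 hf2

omit [Ring A] [Algebra K A] in
theorem cyclic_symm (a b c : Fin n) : f a b c = f b c a := by
  rw [hf1, hf2, neg_neg]

theorem sum_smul_mul_bivector :
    ∑ d, ∑ p, ∑ q, f d p q • (x d * (x p * bivector x f q))
      = ∑ q, bivector x f q * bivector x f q := by
  rw [sum_comm_cycle]
  refine sum_congr rfl fun q _ => ?_
  have expand : bivector x f q = ∑ d, ∑ p, f d p q • (x d * x p) := by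
    simp only [bivector, cyclic_symm hf1 hf2 q]
  nth_rewrite 2 [expand]
  simp only [sum_mul, smul_mul_assoc, mul_assoc]

variable (hx : ∀ a b, x a * x b + x b * x a = if a = b then 1 else 0)
include hx

theorem bivector_mul_sub_mul_bivector (d u : Fin n) :
    bivector x f d * x u - x u * bivector x f d = ∑ v, (-2 * f v d u) • x v := by
  simp only [bivector, sum_mul, mul_sum, smul_mul_assoc, mul_smul_comm, ← sum_sub_distrib,
    ← smul_sub, mul_mul_sub_mul_mul hx]
  simp only [smul_sub, smul_ite, smul_zero, sum_sub_distrib, sum_ite_eq', mem_univ, if_true,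
    sum_ite_irrel, sum_const_zero]
  rw [← sum_sub_distrib]
  refine sum_congr rfl fun v _ => ?_
  rw [hf2 d u v, hf1 d v u]
  module

theorem cubic_mul_add_mul_cubic (d : Fin n) :
    cubic x f * x d + x d * cubic x f = (3 : K) • bivector x f d := by
  have split (a : Fin n) : x a * bivector x f a * x d + x d * (x a * bivector x f a)
      = (x a * x d + x d * x a) * bivector x f a
        + x a * (bivector x f a * x d - x d * bivector x f a) := by noncomm_ring
  have cross : ∑ a, x a * ∑ v, (-2 * f v a d) • x v = (2 : K) • bivector x f d := by
    simp only [bivector, mul_sum, mul_smul_comm, smul_sum, smul_smul]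
    refine sum_congr rfl fun a _ => sum_congr rfl fun v _ => ?_
    rw [cyclic_symm hf1 hf2 v a d, cyclic_symm hf1 hf2 a d v, hf2 d v a]
    congr 1
    ring
  rw [cubic_eq_sum_mul_bivector, sum_mul, mul_sum, ← sum_add_distrib]
  simp only [split, hx, bivector_mul_sub_mul_bivector hf1 hf2 hx, sum_add_distrib, ite_mul,
    one_mul, zero_mul, sum_ite_eq', mem_univ, if_true, cross]
  module

theorem cubic_mul_bivector_sub_bivector_mul (d : Fin n) :
    cubic x f * bivector x f d - bivector x f d * cubic x f
      = (3 : K) • ∑ p, ∑ q, f d p q • (bivector x f p * x q - x p * bivector x f q) := by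
  have split (p q : Fin n) : cubic x f * (x p * x q) - x p * x q * cubic x f
      = (cubic x f * x p + x p * cubic x f) * x q - x p * (cubic x f * x q + x q * cubic x f) := by
    noncomm_ring
  rw [bivector]
  simp only [mul_sum, sum_mul, mul_smul_comm, smul_mul_assoc, ← sum_sub_distrib, ← smul_sub, split,
    cubic_mul_add_mul_cubic hf1 hf2 hx, smul_sum, smul_comm (3 : K)]

theorem sum_smul_bivector_mul :
    ∑ d, ∑ p, ∑ q, f d p q • (x d * (bivector x f p * x q))
      = -∑ p, bivector x f p * bivector x f p
        - (∑ a, ∑ b, ∑ c, f a b c * f a b c) • (1 : A) := by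
  have split (d p q : Fin n) : x d * (bivector x f p * x q)
      = x d * (x q * bivector x f p) + x d * (bivector x f p * x q - x q * bivector x f p) := by
    noncomm_ring
  have reorder : ∑ d, ∑ p, ∑ q, f d p q • (x d * (x q * bivector x f p))
      = -∑ p, bivector x f p * bivector x f p := by
    rw [sum_comm, ← sum_neg_distrib]
    refine sum_congr rfl fun p _ => ?_
    simp only [bivector, sum_mul, ← sum_neg_distrib, smul_mul_assoc, mul_assoc, ← neg_smul,
      hf1 _ p]
  have contract : ∑ d, ∑ p, ∑ q, f d p q • (x d * ∑ v, (-2 * f v p q) • x v)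
      = -((∑ a, ∑ b, ∑ c, f a b c * f a b c) • (1 : A)) := by
    have symm (d v : Fin n) : ∑ p, ∑ q, f d p q * f v p q = ∑ p, ∑ q, f v p q * f d p q := by
      simp only [mul_comm]
    calc ∑ d, ∑ p, ∑ q, f d p q • (x d * ∑ v, (-2 * f v p q) • x v)
        = (-1 : K) • (2 : K) • ∑ d, ∑ v, (∑ p, ∑ q, f d p q * f v p q) • (x d * x v) := by
          simp only [mul_sum, mul_smul_comm, smul_sum, smul_smul, sum_smul]
          refine sum_congr rfl fun d _ => ?_
          rw [sum_comm_cycle]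
          exact sum_congr rfl fun _ _ => sum_congr rfl fun _ _ => sum_congr rfl fun _ _ => by
            congr 1
            ring
      _ = -((∑ a, ∑ b, ∑ c, f a b c * f a b c) • (1 : A)) := by
          rw [two_smul_sum_smul_mul_of_symm hx _ symm, neg_one_smul]
  simp only [split, smul_add, sum_add_distrib, reorder,
    bivector_mul_sub_mul_bivector hf1 hf2 hx, contract, sub_eq_add_neg]

variable (hjac : ∀ a b c d, ∑ e, (f a b e * f e c d + f c b e * f a e d + f d b e * f a c e) = 0)
include hjac

theorem commute_bivector_cubic (b : Fin n) : Commute (bivector x f b) (cubic x f) := by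
  have coeff (a c d : Fin n) : ∑ e, (-2 * f a b e * f e c d + -2 * f c b e * f a e d
      + -2 * f d b e * f a c e) = 0 := by
    rw [← mul_zero (-2 : K), ← hjac a b c d, mul_sum]
    exact sum_congr rfl fun _ _ => by ring
  rw [Commute, SemiconjBy, ← sub_eq_zero,
    mul_cubic_sub_cubic_mul _ _ (bivector_mul_sub_mul_bivector hf1 hf2 hx b) f]
  simp only [cubic, coeff, zero_smul, sum_const_zero]

theorem cubic_mul_self_add_self :
    cubic x f * cubic x f + cubic x f * cubic x f
      = (3 : K) • ∑ d, bivector x f d * bivector x f d := by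
  have split (d : Fin n) : cubic x f * (x d * bivector x f d) + x d * bivector x f d * cubic x f
      = (cubic x f * x d + x d * cubic x f) * bivector x f d
        - x d * (cubic x f * bivector x f d - bivector x f d * cubic x f) := by noncomm_ring
  calc cubic x f * cubic x f + cubic x f * cubic x f
      = cubic x f * ∑ d, x d * bivector x f d + (∑ d, x d * bivector x f d) * cubic x f := by
        rw [← cubic_eq_sum_mul_bivector]
    _ = (3 : K) • ∑ d, bivector x f d * bivector x f d := by
        simp only [mul_sum, sum_mul, ← sum_add_distrib, split, cubic_mul_add_mul_cubic hf1 hf2 hx,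
          (commute_bivector_cubic hf1 hf2 hx hjac _).eq, sub_self, mul_zero, sub_zero,
          smul_mul_assoc, smul_sum]

theorem two_smul_sum_bivector_mul_self [CharZero K] :
    (2 : K) • ∑ d, bivector x f d * bivector x f d
      = -((∑ a, ∑ b, ∑ c, f a b c * f a b c) • (1 : A)) := by
  have vanish : ∑ d, x d * (cubic x f * bivector x f d - bivector x f d * cubic x f) = 0 := by
    simp only [(commute_bivector_cubic hf1 hf2 hx hjac _).eq, sub_self, mul_zero,
      sum_const_zero]
  simp only [cubic_mul_bivector_sub_bivector_mul hf1 hf2 hx, mul_smul_comm, mul_sum, mul_sub,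
    smul_sub, sum_sub_distrib, ← smul_sum, sum_smul_bivector_mul hf1 hf2 hx,
    sum_smul_mul_bivector hf1 hf2] at vanish
  linear_combination (norm := module) (-(1 / 3) : K) • vanish

end Alternating

end CliffordCubic

open CliffordCubic in
/-- in the Clifford algebra, the cubic element
`γ = -(1/6) ∑ f_{abc} x_a x_b x_c` squares to the scalar
`-(1/48) ∑ f_{abc} f_{abc}`. -/
theorem stmt15 {K : Type*} [Field K] [CharZero K]
    {A : Type*} [Ring A] [Algebra K A] {n : ℕ}
    (x : Fin n → A) (f : Fin n → Fin n → Fin n → K)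
    (hx : ∀ a b, x a * x b + x b * x a = if a = b then 1 else 0)
    (hf1 : ∀ a b c, f a b c = - f b a c)
    (hf2 : ∀ a b c, f a b c = - f a c b)
    (hjac : ∀ a b c d, ∑ e, (f a b e * f e c d + f c b e * f a e d
        + f d b e * f a c e) = 0)
    (γ : A)
    (hγ : γ = (-(1/6 : K)) • ∑ a, ∑ b, ∑ c, f a b c • (x a * x b * x c)) :
    γ * γ = ((-(1/48 : K)) * ∑ a, ∑ b, ∑ c, f a b c * f a b c) • (1 : A) := by
  have hS : γ = (-(1 / 6 : K)) • cubic x f := hγ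
  have square := cubic_mul_self_add_self hf1 hf2 hx hjac
  have casimir := two_smul_sum_bivector_mul_self hf1 hf2 hx hjac
  rw [hS, smul_mul_smul_comm]
  linear_combination (norm := module) (1 / 72 : K) • square + (1 / 48 : K) • casimir
end

section
/- In the quantum Weil algebra W(g) = U(g) ⊗ Cl(g), the cubic Dirac-type element D = Σ_a x_a u_a + γ satisfies D² = (1/2) Σ_a u_a u_a + γ², which lies in the center of W(g); consequently ad(D)² = 0, i.e., the differential d = ad(D) squares to zero. -/
/-!
Write `D = S + γ` with `S = ∑ x_a u_a`, and let `λ_d = ∑ f_{dab} x_a x_b`. The Clifford and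
bracket relations give `2 S² = Ω + ∑ λ_c u_c`, with `Ω` the Casimir, while `{γ, x_d} = -λ_d / 2`;
so the cross term `{S, γ}` cancels `(∑ λ_c u_c) / 2`. The square is central: `Ω` is central in
`U(g)` and commutes with `Cl(g)`, `γ` commutes with `U(g)`, and
`[γ², x_d] = [γ, {γ, x_d}] = -[γ, λ_d] / 2` vanishes because `ad λ_d` acts on the Clifford
generators through `ad e_d`, and the Jacobi identity says that `f` is an `ad`-invariant tensor.
Finally `D` is odd, so `d² z = [D², z] = 0`.
-/

open Finset

namespace QuantumWeil

section Sums

variable {M α β γ : Type*} [AddCommMonoid M] [Fintype α] [Fintype β] [Fintype γ]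

theorem sum_comm_rotate (g : α → β → γ → M) :
    ∑ a, ∑ b, ∑ c, g a b c = ∑ b, ∑ c, ∑ a, g a b c := by
  rw [sum_comm]
  exact sum_congr rfl fun _ _ => sum_comm

theorem sum_comm_swap₁₄ (g : α → β → γ → α → M) :
    ∑ a, ∑ b, ∑ c, ∑ p, g a b c p = ∑ a, ∑ b, ∑ c, ∑ p, g p b c a :=
  calc ∑ a, ∑ b, ∑ c, ∑ p, g a b c p = ∑ a, ∑ p, ∑ b, ∑ c, g a b c p :=
        sum_congr rfl fun _ _ => (sum_comm_rotate _).symm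
    _ = ∑ p, ∑ a, ∑ b, ∑ c, g a b c p := sum_comm
    _ = ∑ p, ∑ b, ∑ c, ∑ a, g a b c p := sum_congr rfl fun _ _ => sum_comm_rotate _

theorem sum_comm_swap₁₃ (g : α → β → α → M) :
    ∑ a, ∑ b, ∑ c, g a b c = ∑ a, ∑ b, ∑ c, g c b a :=
  (sum_comm_rotate g).trans sum_comm

end Sums

theorem sum_sum_smul_add_swap_eq_zero {ι R M : Type*} [Fintype ι] [Ring R] [AddCommGroup M]
    [Module R M] (g : ι → ι → R) (hg : ∀ a c, g a c = -g c a) (m : ι → ι → M) :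
    ∑ a, ∑ c, g c a • (m a c + m c a) = 0 := by
  have hswap : ∑ a, ∑ c, g c a • m c a = -∑ a, ∑ c, g c a • m a c := by
    rw [sum_comm, ← sum_neg_distrib]
    refine sum_congr rfl fun a _ => ?_
    rw [← sum_neg_distrib]
    exact sum_congr rfl fun c _ => by rw [hg, neg_smul]
  simp only [smul_add, sum_add_distrib, hswap, add_neg_cancel]

theorem commute_mul_self_of_commute_anticomm {R : Type*} [Ring R] {a b : R}
    (h : Commute a (a * b + b * a)) : Commute (a * a) b := by
  rw [commute_iff_eq, ← sub_eq_zero]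
  calc a * a * b - b * (a * a) = a * (a * b + b * a) - (a * b + b * a) * a := by noncomm_ring
    _ = 0 := by rw [h.eq, sub_self]

theorem commute_of_adjoin_eq_top {R B : Type*} [CommSemiring R] [Semiring B] [Algebra R B]
    {s : Set B} (hs : Algebra.adjoin R s = ⊤) {c : B} (hc : ∀ g ∈ s, Commute c g) (z : B) :
    Commute c z := by
  have hz : z ∈ Subalgebra.centralizer R (Subalgebra.centralizer R s) :=
    Algebra.adjoin_le_centralizer_centralizer R s (hs ▸ Algebra.mem_top)
  exact (Subalgebra.mem_centralizer_iff R).1 hz c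
    ((Subalgebra.mem_centralizer_iff R).2 fun g hg => (hc g hg).eq.symm)

theorem mul_sub_map_mul_twice {R F : Type*} [Ring R] [FunLike F R R] [RingHomClass F R R]
    (σ : F) (hσσ : ∀ z, σ (σ z) = z) {D : R} (hσD : σ D = -D) (z : R) :
    D * (D * z - σ z * D) - σ (D * z - σ z * D) * D = D * D * z - z * (D * D) := by
  rw [map_sub, map_mul, map_mul, hσσ, hσD]
  noncomm_ring

variable {K A : Type*} [Field K] [Ring A] [Algebra K A] {n : ℕ}

def cubic (x : Fin n → A) (F : Fin n → Fin n → Fin n → K) : A :=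
  ∑ a, ∑ b, ∑ c, F a b c • (x a * x b * x c)

def quadratic (x : Fin n → A) (f : Fin n → Fin n → Fin n → K) (d : Fin n) : A :=
  ∑ a, ∑ b, f d a b • (x a * x b)

/-- The matrix `M` acting as a derivation on 3-tensors. -/
def derivAct (M : Fin n → Fin n → K) (F : Fin n → Fin n → Fin n → K) :
    Fin n → Fin n → Fin n → K :=
  fun a b c => ∑ p, (F p b c * M a p + F a p c * M b p + F a b p * M c p)

theorem cubic_zero (x : Fin n → A) : cubic x (0 : Fin n → Fin n → Fin n → K) = 0 := by
  simp [cubic]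

theorem commute_cubic (x : Fin n → A) {y : A} (h : ∀ a, Commute y (x a))
    (F : Fin n → Fin n → Fin n → K) : Commute y (cubic x F) :=
  Commute.sum_right _ _ _ fun a _ => Commute.sum_right _ _ _ fun b _ =>
    Commute.sum_right _ _ _ fun c _ =>
      (((h a).mul_right (h b)).mul_right (h c)).smul_right _

theorem map_cubic_of_map_eq_neg (σ : A →ₐ[K] A) {x : Fin n → A}
    (hσx : ∀ a, σ (x a) = -x a) (F : Fin n → Fin n → Fin n → K) :
    σ (cubic x F) = -cubic x F := by
  simp only [cubic, map_sum, map_smul, map_mul, hσx, neg_mul, mul_neg, neg_neg, smul_neg,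
    sum_neg_distrib]

theorem mul_cubic_sub_cubic_mul (x : Fin n → A) {X : A} {M : Fin n → Fin n → K}
    (hX : ∀ q, X * x q - x q * X = ∑ p, M p q • x p) (F : Fin n → Fin n → Fin n → K) :
    X * cubic x F - cubic x F * X = cubic x (derivAct M F) := by
  have hmono : ∀ a b c, X * (x a * x b * x c) - x a * x b * x c * X
      = (X * x a - x a * X) * x b * x c + x a * (X * x b - x b * X) * x c
        + x a * x b * (X * x c - x c * X) := fun a b c => by noncomm_ring
  calc X * cubic x F - cubic x F * X
      = ∑ a, ∑ b, ∑ c, F a b c • (X * (x a * x b * x c) - x a * x b * x c * X) := by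
        simp only [cubic, mul_sum, sum_mul, mul_smul_comm, smul_mul_assoc, ← sum_sub_distrib,
          smul_sub]
    _ = ∑ a, ∑ b, ∑ c, ∑ p, ((F a b c * M p a) • (x p * x b * x c)
          + (F a b c * M p b) • (x a * x p * x c) + (F a b c * M p c) • (x a * x b * x p)) := by
        simp only [hmono, hX, sum_mul, mul_sum, smul_mul_assoc, mul_smul_comm, smul_add,
          smul_sum, smul_smul, ← sum_add_distrib]
    _ = cubic x (derivAct M F) := by
        simp only [cubic, derivAct, sum_smul, add_smul, sum_add_distrib]
        congr 1
        congr 1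
        · exact sum_comm_swap₁₄ _
        · exact sum_congr rfl fun _ _ => sum_comm_swap₁₃ _
        · exact sum_congr rfl fun _ _ => sum_congr rfl fun _ _ => sum_comm

section Clifford

variable {x : Fin n → A} (hx : ∀ a b, x a * x b + x b * x a = if a = b then 1 else 0)
include hx

theorem clifford_mul_mul_sub (q a b : Fin n) :
    x q * (x a * x b) - x a * x b * x q = (if q = a then x b else 0) - if q = b then x a else 0 :=
  calc x q * (x a * x b) - x a * x b * x q
      = (x q * x a + x a * x q) * x b - x a * (x q * x b + x b * x q) := by noncomm_ring
    _ = _ := by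
      rw [hx, hx]
      simp only [ite_mul, one_mul, zero_mul, mul_ite, mul_one, mul_zero]

theorem clifford_cubic_anticomm (a b c d : Fin n) :
    x a * x b * x c * x d + x d * (x a * x b * x c) = (if d = a then x b * x c else 0)
      - (if d = b then x a * x c else 0) + if c = d then x a * x b else 0 :=
  calc x a * x b * x c * x d + x d * (x a * x b * x c)
      = x a * x b * (x c * x d + x d * x c) + (x d * (x a * x b) - x a * x b * x d) * x c := by
        noncomm_ring
    _ = _ := by
      rw [hx, clifford_mul_mul_sub hx]
      simp only [sub_mul, ite_mul, zero_mul, mul_ite, mul_one, mul_zero]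
      abel

variable {f : Fin n → Fin n → Fin n → K}

theorem quadratic_mul_sub_mul (hf2 : ∀ a b c, f a b c = -f a c b) (d q : Fin n) :
    quadratic x f d * x q - x q * quadratic x f d = ∑ p, (2 * f d p q) • x p := by
  simp only [quadratic, sum_mul, mul_sum, smul_mul_assoc, mul_smul_comm, ← sum_sub_distrib,
    ← smul_sub, ← neg_sub (x q * _), clifford_mul_mul_sub hx]
  simp only [smul_neg, smul_sub, smul_ite, smul_zero, sum_neg_distrib, sum_sub_distrib,
    sum_ite_irrel, sum_const_zero, sum_ite_eq, mem_univ, if_true, hf2 d q, neg_smul,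
    two_mul, add_smul, sum_add_distrib]
  abel

theorem cubic_mul_add_mul (hf1 : ∀ a b c, f a b c = -f b a c)
    (hf2 : ∀ a b c, f a b c = -f a c b) (d : Fin n) :
    cubic x f * x d + x d * cubic x f = (3 : K) • quadratic x f d := by
  have hcyc : ∀ a b, f a b d = f d a b := fun a b => by rw [hf2, hf1, neg_neg]
  simp only [cubic, sum_mul, mul_sum, smul_mul_assoc, mul_smul_comm, ← sum_add_distrib,
    ← smul_add, clifford_cubic_anticomm hx]
  simp only [smul_add, smul_sub, smul_ite, smul_zero, sum_add_distrib, sum_sub_distrib,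
    sum_ite_irrel, sum_const_zero, sum_ite_eq, sum_ite_eq', mem_univ, if_true, hf1 _ d, hcyc,
    neg_smul, sum_neg_distrib]
  rw [quadratic]
  module

theorem commute_quadratic_cubic (hf1 : ∀ a b c, f a b c = -f b a c)
    (hf2 : ∀ a b c, f a b c = -f a c b)
    (hjac : ∀ a b c d, ∑ e, (f a b e * f e c d + f c b e * f a e d + f d b e * f a c e) = 0)
    (d : Fin n) : Commute (quadratic x f d) (cubic x f) := by
  have hinv : derivAct (fun p q => 2 * f d p q) f = 0 := by
    funext a b c
    calc derivAct (fun p q => 2 * f d p q) f a b c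
        = -2 * ∑ e, (f a d e * f e b c + f b d e * f a e c + f c d e * f a b e) := by
          rw [derivAct, mul_sum]
          refine sum_congr rfl fun p _ => ?_
          rw [hf1 d a, hf1 d b, hf1 d c]
          ring
      _ = 0 := by rw [hjac, mul_zero]
  rw [commute_iff_eq, ← sub_eq_zero, mul_cubic_sub_cubic_mul x (quadratic_mul_sub_mul hx hf2 d),
    hinv, cubic_zero]

end Clifford

theorem commute_casimir {u : Fin n → A} {f : Fin n → Fin n → Fin n → K}
    (hu : ∀ a b, u a * u b - u b * u a = ∑ c, f c a b • u c)
    (hf1 : ∀ a b c, f a b c = -f b a c) (e : Fin n) :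
    Commute (∑ a, u a * u a) (u e) := by
  have hterm : ∀ a,
      u a * u a * u e - u e * (u a * u a) = ∑ c, f c a e • (u a * u c + u c * u a) :=
    fun a => calc
      u a * u a * u e - u e * (u a * u a)
          = u a * (u a * u e - u e * u a) + (u a * u e - u e * u a) * u a := by noncomm_ring
      _ = _ := by
        simp only [hu, mul_sum, sum_mul, ← sum_add_distrib, mul_smul_comm, smul_mul_assoc,
          smul_add]
  rw [commute_iff_eq, ← sub_eq_zero, sum_mul, mul_sum, ← sum_sub_distrib]
  simp only [hterm]
  exact sum_sum_smul_add_swap_eq_zero (f · · e) (fun a c => hf1 a c e) (fun a c => u a * u c)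

theorem diracLinear_mul_self_add {u x : Fin n → A} {f : Fin n → Fin n → Fin n → K}
    (hu : ∀ a b, u a * u b - u b * u a = ∑ c, f c a b • u c)
    (hx : ∀ a b, x a * x b + x b * x a = if a = b then 1 else 0)
    (hux : ∀ a b, u a * x b = x b * u a) :
    (∑ a, x a * u a) * (∑ a, x a * u a) + (∑ a, x a * u a) * (∑ a, x a * u a)
      = ∑ a, u a * u a + ∑ c, quadratic x f c * u c := by
  have hsq : (∑ a, x a * u a) * (∑ a, x a * u a) = ∑ a, ∑ b, x a * x b * (u a * u b) := by
    rw [sum_mul_sum]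
    refine sum_congr rfl fun a _ => sum_congr rfl fun b _ => ?_
    calc x a * u a * (x b * u b) = x a * (u a * x b) * u b := by noncomm_ring
      _ = x a * x b * (u a * u b) := by rw [hux]; noncomm_ring
  have hpair : ∀ a b, x a * x b * (u a * u b) + x b * x a * (u b * u a)
      = ∑ c, f c a b • (x a * x b * u c) + if a = b then u a * u a else 0 := fun a b =>
    calc x a * x b * (u a * u b) + x b * x a * (u b * u a)
        = x a * x b * (u a * u b - u b * u a) + (x a * x b + x b * x a) * (u b * u a) := by
          noncomm_ring
      _ = _ := by
        rw [hu, hx, mul_sum]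
        simp only [mul_smul_comm, ite_mul, one_mul, zero_mul]
        split_ifs with h <;> simp [h]
  calc _ = ∑ a, ∑ b, (x a * x b * (u a * u b) + x b * x a * (u b * u a)) := by
        rw [hsq]
        nth_rewrite 2 [sum_comm]
        simp only [sum_add_distrib]
    _ = ∑ a, u a * u a + ∑ c, quadratic x f c * u c := by
        simp only [hpair, sum_add_distrib, sum_ite_eq, mem_univ, if_true, quadratic, sum_mul,
          smul_mul_assoc]
        rw [add_comm]
        exact congrArg _ (sum_comm_rotate _).symm

theorem diracLinear_anticomm {u x : Fin n → A} {y : A} (hy : ∀ a, Commute y (u a)) :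
    (∑ a, x a * u a) * y + y * ∑ a, x a * u a = ∑ a, (y * x a + x a * y) * u a := by
  rw [sum_mul, mul_sum, ← sum_add_distrib]
  refine sum_congr rfl fun a _ => ?_
  calc x a * u a * y + y * (x a * u a) = x a * (u a * y) + y * x a * u a := by noncomm_ring
    _ = (y * x a + x a * y) * u a := by rw [← (hy a).eq]; noncomm_ring

section Dirac

variable {u x : Fin n → A} {f : Fin n → Fin n → Fin n → K} {γ D : A}
  (hu : ∀ a b, u a * u b - u b * u a = ∑ c, f c a b • u c)
  (hx : ∀ a b, x a * x b + x b * x a = if a = b then 1 else 0)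
  (hux : ∀ a b, u a * x b = x b * u a)
  (hf1 : ∀ a b c, f a b c = -f b a c) (hf2 : ∀ a b c, f a b c = -f a c b)
  (hjac : ∀ a b c d, ∑ e, (f a b e * f e c d + f c b e * f a e d + f d b e * f a c e) = 0)
  (hγ : γ = (-(1/6 : K)) • cubic x f)

include hux hγ in
theorem commute_gamma_u (a : Fin n) : Commute γ (u a) :=
  hγ ▸ ((commute_cubic x (fun b => hux a b) f).smul_right _).symm

include hx hf1 hf2 hγ in
theorem gamma_anticomm [CharZero K] (d : Fin n) :
    γ * x d + x d * γ = (-(1/2 : K)) • quadratic x f d := by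
  rw [hγ, smul_mul_assoc, mul_smul_comm, ← smul_add, cubic_mul_add_mul hx hf1 hf2, smul_smul]
  norm_num

include hu hx hux hf1 hf2 hγ in
theorem dirac_mul_self [CharZero K] (hD : D = ∑ a, x a * u a + γ) :
    D * D = (1/2 : K) • ∑ a, u a * u a + γ * γ := by
  have hsq : (∑ a, x a * u a) * (∑ a, x a * u a)
      = (1/2 : K) • (∑ a, u a * u a + ∑ c, quadratic x f c * u c) := by
    rw [← diracLinear_mul_self_add hu hx hux, ← two_smul K, smul_smul]
    norm_num
  have hcross : (∑ a, x a * u a) * γ + γ * ∑ a, x a * u a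
      = (-(1/2 : K)) • ∑ c, quadratic x f c * u c := by
    simp only [diracLinear_anticomm (commute_gamma_u hux hγ), gamma_anticomm hx hf1 hf2 hγ,
      smul_mul_assoc, smul_sum]
  calc D * D = (∑ a, x a * u a) * (∑ a, x a * u a)
        + ((∑ a, x a * u a) * γ + γ * ∑ a, x a * u a) + γ * γ := by rw [hD]; noncomm_ring
    _ = (1/2 : K) • ∑ a, u a * u a + γ * γ := by rw [hsq, hcross]; module

include hu hx hux hf1 hf2 hjac hγ in
theorem commute_half_casimir_add_gamma_sq [CharZero K] :
    ∀ g ∈ Set.range u ∪ Set.range x,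
      Commute ((1/2 : K) • ∑ a, u a * u a + γ * γ) g := by
  rintro _ (⟨e, rfl⟩ | ⟨e, rfl⟩)
  · have hγu := commute_gamma_u hux hγ e
    exact ((commute_casimir hu hf1 e).smul_left _).add_left (hγu.mul_left hγu)
  · have hcas : Commute (∑ a, u a * u a) (x e) :=
      Commute.sum_left _ _ _ fun a _ => Commute.mul_left (hux a e) (hux a e)
    have hγQ : Commute γ (quadratic x f e) :=
      hγ ▸ (commute_quadratic_cubic hx hf1 hf2 hjac e).symm.smul_left _
    refine (hcas.smul_left _).add_left (commute_mul_self_of_commute_anticomm ?_)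
    rw [gamma_anticomm hx hf1 hf2 hγ]
    exact hγQ.smul_right _

include hγ in
theorem map_dirac (σ : A →ₐ[K] A) (hσx : ∀ a, σ (x a) = -x a)
    (hσu : ∀ a, σ (u a) = u a) (hD : D = ∑ a, x a * u a + γ) : σ D = -D := by
  rw [hD, hγ, map_add, map_sum, map_smul, map_cubic_of_map_eq_neg σ hσx]
  simp only [map_mul, hσx, hσu, neg_mul, sum_neg_distrib, smul_neg, neg_add]

end Dirac

end QuantumWeil

open QuantumWeil

/-- in the quantum Weil algebra `W(g) = U(g) ⊗ Cl(g)` (modeled as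
an algebra generated by even elements `u a` and odd elements `x a` with the
stated relations), the cubic Dirac element `D = ∑ x_a u_a + γ` satisfies
`D² = (1/2) ∑ u_a u_a + γ²`, which is central; consequently the differential
`d = ad(D)` (super-adjoint action, `d z = D z - σ(z) D` with `σ` the parity
automorphism) squares to zero. -/
theorem stmt16 {K : Type*} [Field K] [CharZero K]
    {A : Type*} [Ring A] [Algebra K A] {n : ℕ}
    (u x : Fin n → A) (f : Fin n → Fin n → Fin n → K)
    (hu : ∀ a b, u a * u b - u b * u a = ∑ c, f c a b • u c)
    (hx : ∀ a b, x a * x b + x b * x a = if a = b then 1 else 0)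
    (hux : ∀ a b, u a * x b = x b * u a)
    (hf1 : ∀ a b c, f a b c = - f b a c)
    (hf2 : ∀ a b c, f a b c = - f a c b)
    (hjac : ∀ a b c d, ∑ e, (f a b e * f e c d + f c b e * f a e d
        + f d b e * f a c e) = 0)
    (hgen : Algebra.adjoin K (Set.range u ∪ Set.range x) = ⊤)
    (σ : A →ₐ[K] A) (hσσ : ∀ z, σ (σ z) = z)
    (hσx : ∀ a, σ (x a) = - x a) (hσu : ∀ a, σ (u a) = u a)
    (γ D : A)
    (hγ : γ = (-(1/6 : K)) • ∑ a, ∑ b, ∑ c, f a b c • (x a * x b * x c))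
    (hD : D = (∑ a, x a * u a) + γ) :
    D * D = (1/2 : K) • (∑ a, u a * u a) + γ * γ ∧
    (∀ z : A, (D * D) * z = z * (D * D)) ∧
    (∀ z : A, D * (D * z - σ z * D) - σ (D * z - σ z * D) * D = 0) := by
  have hγ' : γ = (-(1/6 : K)) • cubic x f := hγ
  have hD2 := dirac_mul_self hu hx hux hf1 hf2 hγ' hD
  have hcentral : ∀ z, Commute (D * D) z :=
    hD2 ▸ commute_of_adjoin_eq_top hgen
      (commute_half_casimir_add_gamma_sq hu hx hux hf1 hf2 hjac hγ')
  refine ⟨hD2, fun z => (hcentral z).eq, fun z => ?_⟩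
  rw [mul_sub_map_mul_twice σ hσσ (map_dirac hγ' σ hσx hσu hD), sub_eq_zero]
  exact (hcentral z).eq
end

section
/- In the quantum covariant Weil algebra W_τ(g) = U(g) ⊗ Cl(g) ⊗ End(V_τ), the element D_τ = D + Σ_a x_a τ_a (with D = Σ_a x_a u_a + γ) satisfies D_τ² = (1/2)(Σ_a u_a u_a + 2 Σ_a u_a τ_a + Σ_a τ_a τ_a + 2γ²). Equivalently, [D + x_a τ_a, D + x_b τ_b] = u_a u_a + 2 u_a τ_a + τ_a τ_a + 2γ² (sums over repeated indices). -/
/-!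
Write `D_τ = U + γ + T` with `U = ∑ x_a u_a` and `T = ∑ x_a τ_a`, and expand the square into
anticommutators. The Clifford relations give `2 U² = ∑ u_a u_a + ∑ f_{crs} x_r x_s u_c`, and
`[U, T]₊ = ∑ u_a τ_a` since the `u`'s and `τ`'s commute. From `[x_a, γ]₊ = g_a` one gets
`[U, γ]₊ = ∑ g_a u_a`, which cancels the cubic term of `U²` exactly; likewise for `T`.
-/

open Finset

namespace WeilAlgebra

variable {K : Type*} [Field K] {A : Type*} [Ring A] [Algebra K A] {n : ℕ}
  (x : Fin n → A) (f : Fin n → Fin n → Fin n → K)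

/-- The element `γ`. -/
def cubic : A := (-(1/6 : K)) • ∑ a, ∑ b, ∑ c, f a b c • (x a * x b * x c)

/-- The element `g_d`. -/
def quadratic (d : Fin n) : A := (-(1/2 : K)) • ∑ r, ∑ s, f d r s • (x r * x s)

variable {x}

theorem sum_mul_sum_add_sum_mul_sum (hx : ∀ a b, x a * x b + x b * x a = if a = b then 1 else 0)
    {v w : Fin n → A} (hvx : ∀ a b, Commute (v a) (x b)) (hwx : ∀ a b, Commute (w a) (x b)) :
    (∑ a, x a * v a) * (∑ b, x b * w b) + (∑ b, x b * w b) * (∑ a, x a * v a)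
      = ∑ a, v a * w a + ∑ a, ∑ b, x b * x a * (w b * v a - v a * w b) := by
  have term : ∀ a b, x a * v a * (x b * w b) + x b * w b * (x a * v a)
      = (if a = b then v a * w b else 0) + x b * x a * (w b * v a - v a * w b) := by
    intro a b
    have hav : x a * v a * (x b * w b) = x a * x b * (v a * w b) := by
      rw [mul_assoc, ← mul_assoc (v a), (hvx a b).eq, mul_assoc, mul_assoc]
    have hbw : x b * w b * (x a * v a) = x b * x a * (w b * v a) := by
      rw [mul_assoc, ← mul_assoc (w b), (hwx b a).eq, mul_assoc, mul_assoc]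
    have hclif : x a * x b = (if a = b then 1 else 0) - x b * x a := eq_sub_of_add_eq (hx a b)
    rw [hav, hbw, hclif]
    split_ifs <;> noncomm_ring
  rw [sum_mul_sum, sum_mul_sum, sum_comm (f := fun b a => x b * w b * (x a * v a))]
  simp_rw [← sum_add_distrib, term, sum_add_distrib, sum_ite_eq, mem_univ, if_true]

theorem sum_mul_sum_add_sum_mul_sum_of_commute
    (hx : ∀ a b, x a * x b + x b * x a = if a = b then 1 else 0)
    {v w : Fin n → A} (hvx : ∀ a b, Commute (v a) (x b)) (hwx : ∀ a b, Commute (w a) (x b))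
    (hvw : ∀ a b, Commute (v a) (w b)) :
    (∑ a, x a * v a) * (∑ b, x b * w b) + (∑ b, x b * w b) * (∑ a, x a * v a)
      = ∑ a, v a * w a := by
  simp only [sum_mul_sum_add_sum_mul_sum hx hvx hwx, (hvw _ _).eq, sub_self, mul_zero,
    sum_const_zero, add_zero]

theorem sum_mul_self_add_self (hx : ∀ a b, x a * x b + x b * x a = if a = b then 1 else 0)
    {v : Fin n → A} (hvx : ∀ a b, Commute (v a) (x b))
    (hv : ∀ a b, v a * v b - v b * v a = ∑ c, f c a b • v c) :
    (∑ a, x a * v a) * (∑ b, x b * v b) + (∑ b, x b * v b) * (∑ a, x a * v a)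
      = ∑ a, v a * v a + ∑ c, ∑ r, ∑ s, f c r s • (x r * x s * v c) := by
  rw [sum_mul_sum_add_sum_mul_sum hx hvx hvx]
  simp_rw [hv, mul_sum, mul_smul_comm]
  rw [sum_comm, sum_congr rfl fun _ _ => sum_comm, sum_comm]

theorem anticomm_mul_mul_mul (hx : ∀ a b, x a * x b + x b * x a = if a = b then 1 else 0)
    (a b c d : Fin n) :
    x d * (x a * x b * x c) + x a * x b * x c * x d
      = (if d = a then x b * x c else 0) - (if d = b then x a * x c else 0)
        + (if d = c then x a * x b else 0) := by
  have swap : ∀ e (y : A), x d * (x e * y) = (if d = e then y else 0) - x e * (x d * y) := by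
    intro e y
    rw [← mul_assoc, eq_sub_of_add_eq (hx d e), sub_mul, ite_mul, one_mul, zero_mul, mul_assoc]
  rw [mul_assoc (x a), swap a, swap b, eq_sub_of_add_eq (hx d c)]
  split_ifs <;> noncomm_ring

theorem mul_cubic_add_cubic_mul [CharZero K]
    (hx : ∀ a b, x a * x b + x b * x a = if a = b then 1 else 0)
    (hf1 : ∀ a b c, f a b c = - f b a c) (hf2 : ∀ a b c, f a b c = - f a c b) (d : Fin n) :
    x d * cubic x f + cubic x f * x d = quadratic x f d := by
  have hf_mid : ∀ a c, f a d c = - f d a c := fun a c => hf1 a d c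
  have hf_last : ∀ a b, f a b d = f d a b := fun a b => by rw [hf2, hf1, neg_neg]
  have hsum : ∑ a, ∑ b, ∑ c, f a b c • (x d * (x a * x b * x c) + x a * x b * x c * x d)
      = (3 : K) • ∑ r, ∑ s, f d r s • (x r * x s) := by
    simp_rw [anticomm_mul_mul_mul hx, smul_add, smul_sub, smul_ite, smul_zero, sum_add_distrib,
      sum_sub_distrib, sum_ite_irrel, sum_const_zero, sum_ite_eq, mem_univ, if_true, hf_mid,
      hf_last, neg_smul, sum_neg_distrib]
    module
  unfold cubic quadratic
  simp_rw [mul_smul_comm, smul_mul_assoc, ← smul_add, mul_sum, sum_mul, ← sum_add_distrib,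
    mul_smul_comm, smul_mul_assoc, ← smul_add, hsum, smul_smul]
  norm_num

theorem commute_cubic {y : A} (hy : ∀ b, Commute y (x b)) : Commute y (cubic x f) :=
  .smul_right (.sum_right _ _ _ fun a _ => .sum_right _ _ _ fun b _ => .sum_right _ _ _ fun c _ =>
    .smul_right (((hy a).mul_right (hy b)).mul_right (hy c)) _) _

theorem sum_mul_cubic_add_cubic_mul_sum [CharZero K]
    (hx : ∀ a b, x a * x b + x b * x a = if a = b then 1 else 0)
    (hf1 : ∀ a b c, f a b c = - f b a c) (hf2 : ∀ a b c, f a b c = - f a c b)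
    {v : Fin n → A} (hvx : ∀ a b, Commute (v a) (x b)) :
    (∑ a, x a * v a) * cubic x f + cubic x f * (∑ a, x a * v a)
      = ∑ a, quadratic x f a * v a := by
  rw [sum_mul, mul_sum, ← sum_add_distrib]
  refine sum_congr rfl fun a _ => ?_
  rw [mul_assoc, (commute_cubic f (hvx a)).eq, ← mul_assoc, ← mul_assoc, ← add_mul,
    mul_cubic_add_cubic_mul f hx hf1 hf2]

theorem sum_mul_self_add_anticomm_cubic [CharZero K]
    (hx : ∀ a b, x a * x b + x b * x a = if a = b then 1 else 0)
    (hf1 : ∀ a b c, f a b c = - f b a c) (hf2 : ∀ a b c, f a b c = - f a c b)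
    {v : Fin n → A} (hvx : ∀ a b, Commute (v a) (x b))
    (hv : ∀ a b, v a * v b - v b * v a = ∑ c, f c a b • v c) :
    (∑ a, x a * v a) * (∑ b, x b * v b)
      + ((∑ a, x a * v a) * cubic x f + cubic x f * (∑ a, x a * v a))
      = (1/2 : K) • ∑ a, v a * v a := by
  have hsq := sum_mul_self_add_self f hx hvx hv
  rw [sum_mul_cubic_add_cubic_mul_sum f hx hf1 hf2 hvx, eq_sub_of_add_eq hsq.symm]
  simp_rw [quadratic, smul_mul_assoc, sum_mul, smul_mul_assoc, ← smul_sum]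
  module

end WeilAlgebra

open WeilAlgebra in
theorem stmt17_general {K : Type*} [Field K] [CharZero K]
    {A : Type*} [Ring A] [Algebra K A] {n : ℕ}
    (u x t : Fin n → A) (f : Fin n → Fin n → Fin n → K)
    (hu : ∀ a b, u a * u b - u b * u a = ∑ c, f c a b • u c)
    (hx : ∀ a b, x a * x b + x b * x a = if a = b then 1 else 0)
    (ht : ∀ a b, t a * t b - t b * t a = ∑ c, f c a b • t c)
    (hux : ∀ a b, u a * x b = x b * u a)
    (hut : ∀ a b, u a * t b = t b * u a)
    (hxt : ∀ a b, x a * t b = t b * x a)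
    (hf1 : ∀ a b c, f a b c = - f b a c)
    (hf2 : ∀ a b c, f a b c = - f a c b)
    (γ D Dτ : A)
    (hγ : γ = (-(1/6 : K)) • ∑ a, ∑ b, ∑ c, f a b c • (x a * x b * x c))
    (hD : D = (∑ a, x a * u a) + γ)
    (hDτ : Dτ = D + ∑ a, x a * t a) :
    Dτ * Dτ = (1/2 : K) • ((∑ a, u a * u a) + 2 • (∑ a, u a * t a)
      + (∑ a, t a * t a) + 2 • (γ * γ)) := by
  have htx : ∀ a b, Commute (t a) (x b) := fun a b => (hxt b a).symm
  have hUU := sum_mul_self_add_anticomm_cubic f hx hf1 hf2 hux hu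
  have hTT := sum_mul_self_add_anticomm_cubic f hx hf1 hf2 htx ht
  have hUT := sum_mul_sum_add_sum_mul_sum_of_commute hx hux htx hut
  change γ = cubic x f at hγ
  subst hDτ hD hγ
  set U := ∑ a, x a * u a
  set T := ∑ a, x a * t a
  calc (U + cubic x f + T) * (U + cubic x f + T)
      = (U * U + (U * cubic x f + cubic x f * U)) + (T * T + (T * cubic x f + cubic x f * T))
        + (U * T + T * U) + cubic x f * cubic x f := by noncomm_ring
    _ = _ := by rw [hUU, hTT, hUT]; module

/-- in the quantum covariant Weil algebra
`W_τ(g) = U(g) ⊗ Cl(g) ⊗ End(V_τ)` (modeled as an algebra generated by even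
elements `u a`, `t a = τ_a`, and odd elements `x a` with the stated relations),
the element `D_τ = D + ∑ x_a τ_a` with `D = ∑ x_a u_a + γ` satisfies
`D_τ² = (1/2)(∑ u_a u_a + 2 ∑ u_a τ_a + ∑ τ_a τ_a + 2γ²)`. -/
theorem stmt17 {K : Type*} [Field K] [CharZero K]
    {A : Type*} [Ring A] [Algebra K A] {n : ℕ}
    (u x t : Fin n → A) (f : Fin n → Fin n → Fin n → K)
    (hu : ∀ a b, u a * u b - u b * u a = ∑ c, f c a b • u c)
    (hx : ∀ a b, x a * x b + x b * x a = if a = b then 1 else 0)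
    (ht : ∀ a b, t a * t b - t b * t a = ∑ c, f c a b • t c)
    (hux : ∀ a b, u a * x b = x b * u a)
    (hut : ∀ a b, u a * t b = t b * u a)
    (hxt : ∀ a b, x a * t b = t b * x a)
    (hf1 : ∀ a b c, f a b c = - f b a c)
    (hf2 : ∀ a b c, f a b c = - f a c b)
    (hjac : ∀ a b c d, ∑ e, (f a b e * f e c d + f c b e * f a e d
        + f d b e * f a c e) = 0)
    (γ D Dτ : A)
    (hγ : γ = (-(1/6 : K)) • ∑ a, ∑ b, ∑ c, f a b c • (x a * x b * x c))
    (hD : D = (∑ a, x a * u a) + γ)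
    (hDτ : Dτ = D + ∑ a, x a * t a) :
    Dτ * Dτ = (1/2 : K) • ((∑ a, u a * u a) + 2 • (∑ a, u a * t a)
      + (∑ a, t a * t a) + 2 • (γ * γ)) :=
  stmt17_general u x t f hu hx ht hux hut hxt hf1 hf2 γ D Dτ hγ hD hDτ
end
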